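/- arXiv:1709.02827 — 9 statements merged into one kernel-verified Lean document; each statement's English description precedes it below -/
import Mathlib

section
/- Let n ≥ 1 and 1 ≤ i ≤ n be integers. Then C(i+3, 4) + C(i+2, 3)·(n-i) + C(i+1, 2)·C(n+1-i, 2) - n·(C(i+1, 2) + i(n-i)) + C(n, 2) = ((i-1)(i-2)/24)·(6n² - 2n(4i+3) + 3i(i+1)). -/
private lemma c2q : ∀ m : ℕ, (Nat.choose (m + 1) 2 : ℚ) = m * (m + 1) / 2 := by
  intro m
  induction m with
  | zero => simp
  | succ k ih =>
    rw [show k + 1 + 1 = (k + 1) + 1 from rfl, Nat.choose_succ_succ (k+1) 1]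
    push_cast [ih, Nat.choose_one_right]
    ring

private lemma c3q : ∀ m : ℕ, (Nat.choose (m + 2) 3 : ℚ) = m * (m + 1) * (m + 2) / 6 := by
  intro m
  induction m with
  | zero => simp
  | succ k ih =>
    rw [show k + 1 + 2 = (k + 2) + 1 from rfl, Nat.choose_succ_succ (k+2) 2]
    push_cast [ih, c2q (k+1)]
    ring

private lemma c4q : ∀ m : ℕ, (Nat.choose (m + 3) 4 : ℚ) = m * (m + 1) * (m + 2) * (m + 3) / 24 := by
  intro m
  induction m with
  | zero => simp
  | succ k ih =>
    rw [show k + 1 + 3 = (k + 3) + 1 from rfl, Nat.choose_succ_succ (k+3) 3]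
    push_cast [ih, c3q (k+1)]
    ring

theorem stmt_1 (n i : ℕ) (hn : 1 ≤ n) (hi : 1 ≤ i) (hin : i ≤ n) :
    (Nat.choose (i + 3) 4 : ℚ) + (Nat.choose (i + 2) 3 : ℚ) * ((n : ℚ) - i)
      + (Nat.choose (i + 1) 2 : ℚ) * (Nat.choose (n + 1 - i) 2 : ℚ)
      - (n : ℚ) * ((Nat.choose (i + 1) 2 : ℚ) + (i : ℚ) * ((n : ℚ) - i))
      + (Nat.choose n 2 : ℚ)
    = (((i : ℚ) - 1) * ((i : ℚ) - 2) / 24)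
        * (6 * (n : ℚ) ^ 2 - 2 * (n : ℚ) * (4 * (i : ℚ) + 3) + 3 * (i : ℚ) * ((i : ℚ) + 1)) := by
  obtain ⟨k, rfl⟩ := Nat.exists_eq_add_of_le hin
  have h1 : i + k + 1 - i = k + 1 := by omega
  obtain ⟨j, rfl⟩ := Nat.exists_eq_add_of_le hi
  rw [h1, show 1 + j + 3 = j + 4 from by ring_nf, show 1 + j + 2 = j + 3 from by ring_nf,
    show 1 + j + 1 = j + 2 from by ring_nf, show 1 + j + k = (j + k) + 1 from by ring_nf,
    show j + 4 = (j + 1) + 3 from by ring_nf, show j + 3 = (j + 1) + 2 from by ring_nf,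
    show j + 2 = (j + 1) + 1 from by ring_nf,
    c4q (j+1), c3q (j+1), c2q (j+1), c2q k, c2q (j+k)]
  push_cast
  ring
end

section
/- For every integer d ≥ 2, the quantity C(2d, d) + Σ_{i=1}^{d} C(2d, 2i)·C(2d-2i, d-i) - 2d·C(2d, d) + C(2d, 2) is strictly positive. -/
/-!
Write `C = C(2d, d)`, `N = C(2d-2, d-1)` and `S` for the sum over `i ≥ 1`. Keeping only the
term `i = 1` gives `S ≥ C(2d, 2) · N = d(2d-1) · N`, while `d · C = 2(2d-1) · N`. Hence
`d(2d-1) · C = 2(2d-1)² · N ≤ d²(2d-1) · N ≤ d · S` as soon as `2(2d-1) ≤ d²`, i.e. `d ≥ 4`,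
and then the quantity is at least `C(2d, 2) > 0`. The cases `d = 2, 3` are computed.
-/

open Finset Nat

theorem Nat.choose_two_mul_two (d : ℕ) : (2 * d).choose 2 = d * (2 * d - 1) := by
  rw [choose_two_right, mul_assoc, Nat.mul_div_cancel_left _ two_pos]

theorem Nat.mul_choose_two_mul_self (d : ℕ) (hd : 1 ≤ d) :
    d * (2 * d).choose d = 2 * (2 * d - 1) * (2 * d - 2).choose (d - 1) := by
  obtain ⟨n, rfl⟩ : ∃ n, d = n + 1 := ⟨d - 1, by omega⟩
  have h := succ_mul_centralBinom_succ n
  rw [centralBinom_eq_two_mul_choose, centralBinom_eq_two_mul_choose] at h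
  rwa [show 2 * (n + 1) - 1 = 2 * n + 1 by omega, show 2 * (n + 1) - 2 = 2 * n by omega,
    Nat.add_sub_cancel]

theorem Nat.choose_two_mul_two_mul_choose_le_sum (d : ℕ) (hd : 1 ≤ d) :
    (2 * d).choose 2 * (2 * d - 2).choose (d - 1) ≤
      ∑ i ∈ Icc 1 d, (2 * d).choose (2 * i) * (2 * d - 2 * i).choose (d - i) :=
  single_le_sum (f := fun i => (2 * d).choose (2 * i) * (2 * d - 2 * i).choose (d - i))
    (fun _ _ => Nat.zero_le _) (mem_Icc.mpr ⟨le_rfl, hd⟩)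

theorem Nat.two_mul_sub_one_mul_choose_le_sum (d : ℕ) (hd : 4 ≤ d) :
    (2 * d - 1) * (2 * d).choose d ≤
      ∑ i ∈ Icc 1 d, (2 * d).choose (2 * i) * (2 * d - 2 * i).choose (d - i) := by
  set N := (2 * d - 2).choose (d - 1)
  have hquad : 2 * (2 * d - 1) ≤ d * d := by
    obtain ⟨m, rfl⟩ : ∃ m, d = m + 4 := ⟨d - 4, by omega⟩
    rw [show 2 * (m + 4) - 1 = 2 * m + 7 by omega]
    nlinarith
  refine Nat.le_of_mul_le_mul_left ?_ (by omega : 0 < d)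
  calc d * ((2 * d - 1) * (2 * d).choose d)
      = (2 * (2 * d - 1)) * (2 * d - 1) * N := by
        rw [mul_left_comm, mul_choose_two_mul_self d (by omega)]; ring
    _ ≤ (d * d) * (2 * d - 1) * N := by gcongr
    _ = d * ((2 * d).choose 2 * N) := by rw [choose_two_mul_two]; ring
    _ ≤ d * ∑ i ∈ Icc 1 d, (2 * d).choose (2 * i) * (2 * d - 2 * i).choose (d - i) := by
        gcongr; exact choose_two_mul_two_mul_choose_le_sum d (by omega)

theorem stmt_7 (d : ℕ) (hd : 2 ≤ d) :
    0 < (Nat.choose (2 * d) d : ℤ)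
        + ∑ i ∈ Finset.Icc 1 d, (Nat.choose (2 * d) (2 * i) : ℤ) * (Nat.choose (2 * d - 2 * i) (d - i) : ℤ)
        - 2 * (d : ℤ) * (Nat.choose (2 * d) d : ℤ) + (Nat.choose (2 * d) 2 : ℤ) := by
  rcases lt_or_ge d 4 with hsmall | hlarge
  · interval_cases d <;> decide
  · have hsum := two_mul_sub_one_mul_choose_le_sum d hlarge
    zify [show 1 ≤ 2 * d by omega] at hsum
    have hpos : 0 < ((2 * d).choose 2 : ℤ) := by exact_mod_cast choose_pos (by omega)
    linarith
end

section
/- For every integer d ≥ 2, the quantity C(2d+1, d) + Σ_{i=1}^{d} C(2d+1, 2i)·C(2d+1-2i, d-i) - (2d+1)·C(2d+1, d) + C(2d+1, 2) is strictly positive. -/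
/-!
The expression equals `∑ᵢ C(2d+1, 2i) C(2d+1-2i, d-i) + C(2d+1, 2) - 2d C(2d+1, d)`. For `d ≥ 3` the
summand `i = 1` alone beats `2d C(2d+1, d)`: writing both in central binomial coefficients `B n = C(2n, n)`,
it reads `d (2d+1) B d / 2` against `d B (d+1)`, and `B (d+1) = 2(2d+1)/(d+1) · B d ≤ (2d+1)/2 · B d`
exactly when `d ≥ 3`. The case `d = 2` is a direct computation.
-/

namespace Nat

theorem centralBinom_succ (n : ℕ) : centralBinom (n + 1) = 2 * (2 * n + 1).choose n := by
  rw [centralBinom, show 2 * (n + 1) = 2 * n + 1 + 1 by ring, choose_succ_succ, choose_symm_half]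
  ring

theorem two_mul_centralBinom_succ_le {n : ℕ} (hn : 3 ≤ n) :
    2 * centralBinom (n + 1) ≤ (2 * n + 1) * centralBinom n := by
  refine Nat.le_of_mul_le_mul_left ?_ (show 0 < n + 1 by omega)
  calc (n + 1) * (2 * centralBinom (n + 1)) = 4 * ((2 * n + 1) * centralBinom n) := by
        rw [mul_left_comm, succ_mul_centralBinom_succ]; ring
    _ ≤ (n + 1) * ((2 * n + 1) * centralBinom n) := by gcongr; omega

theorem choose_two_mul_add_one_two (n : ℕ) : (2 * n + 1).choose 2 = n * (2 * n + 1) := by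
  rw [choose_two_right, Nat.add_sub_cancel, mul_comm, mul_assoc, Nat.mul_div_cancel_left _ two_pos]

theorem two_mul_mul_choose_le {d : ℕ} (hd : 3 ≤ d) :
    2 * d * (2 * d + 1).choose d ≤ (2 * d + 1).choose 2 * (2 * (d - 1) + 1).choose (d - 1) := by
  obtain ⟨n, rfl⟩ : ∃ n, d = n + 1 := ⟨d - 1, by omega⟩
  have := two_mul_centralBinom_succ_le hd
  rw [centralBinom_succ, centralBinom_succ] at this
  rw [choose_two_mul_add_one_two, Nat.add_sub_cancel]
  nlinarith

end Nat

open Finset in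
theorem stmt_8 (d : ℕ) (hd : 2 ≤ d) :
    0 < (Nat.choose (2 * d + 1) d : ℤ)
        + ∑ i ∈ Finset.Icc 1 d,
            (Nat.choose (2 * d + 1) (2 * i) : ℤ) * (Nat.choose (2 * d + 1 - 2 * i) (d - i) : ℤ)
        - (2 * (d : ℤ) + 1) * (Nat.choose (2 * d + 1) d : ℤ) + (Nat.choose (2 * d + 1) 2 : ℤ) := by
  obtain rfl | hd3 := hd.eq_or_lt
  · decide
  have hfirst : ((2 * d + 1).choose 2 * (2 * (d - 1) + 1).choose (d - 1) : ℤ) ≤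
      ∑ i ∈ Icc 1 d, ((2 * d + 1).choose (2 * i) : ℤ) * ((2 * d + 1 - 2 * i).choose (d - i) : ℤ) := by
    rw [show 2 * (d - 1) + 1 = 2 * d + 1 - 2 * 1 by omega]
    exact single_le_sum (f := fun i ↦ ((2 * d + 1).choose (2 * i) : ℤ) *
      ((2 * d + 1 - 2 * i).choose (d - i) : ℤ)) (fun i _ ↦ by positivity) (mem_Icc.2 ⟨le_rfl, by omega⟩)
  have hkey : (2 * d * (2 * d + 1).choose d : ℤ) ≤
      (2 * d + 1).choose 2 * (2 * (d - 1) + 1).choose (d - 1) := by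
    exact_mod_cast Nat.two_mul_mul_choose_le hd3
  have hpos : (0 : ℤ) < (2 * d + 1).choose 2 := by exact_mod_cast Nat.choose_pos (by omega)
  linarith
end

section
/- For integers n ≥ 2 and d ≥ 2, define f(n, d) = d^{n-1} - C(n+d-1, d) + n - 1. Then f(n, d) = 0 if and only if n = 2, or n = 3 and d = 2. -/
lemma choose_sym (m d : ℕ) : Nat.choose (m + d) d = Nat.choose (m + d) m := by
  have := Nat.choose_symm (n := m + d) (k := d) (by omega)
  simpa [Nat.add_sub_cancel] using this.symm

lemma two_mul_choose : ∀ d : ℕ, 2 * Nat.choose (d + 2) 2 = (d + 2) * (d + 1)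
  | 0 => rfl
  | d + 1 => by
    have ih := two_mul_choose d
    rw [show d + 1 + 2 = (d + 2) + 1 by omega,
      show (d + 2) + 1 = (d + 2) + 1 from rfl]
    rw [Nat.choose_succ_succ (d + 2) 1, Nat.choose_one_right]
    nlinarith [ih]

lemma six_mul_choose : ∀ d : ℕ, 6 * Nat.choose (d + 3) 3 = (d + 3) * (d + 2) * (d + 1)
  | 0 => rfl
  | d + 1 => by
    have ih := six_mul_choose d
    have h2 := two_mul_choose (d + 1)
    rw [show d + 1 + 3 = (d + 3) + 1 by omega]
    rw [Nat.choose_succ_succ (d + 3) 2]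
    rw [show d + 3 = d + 1 + 2 by omega]
    nlinarith [ih, h2]

lemma step (m d : ℕ) (hm : 1 ≤ m) (hd : 2 ≤ d)
    (h : Nat.choose (m + d) m ≤ d ^ m) :
    Nat.choose (m + 1 + d) (m + 1) ≤ d ^ (m + 1) := by
  have key := Nat.add_one_mul_choose_eq (m + d) m
  have hle : m + d + 1 ≤ d * (m + 1) := by nlinarith
  have h1 : Nat.choose (m + d + 1) (m + 1) * (m + 1) ≤ d ^ (m + 1) * (m + 1) := by
    calc Nat.choose (m + d + 1) (m + 1) * (m + 1)
        = (m + d + 1) * Nat.choose (m + d) m := by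
          simpa [Nat.succ_eq_add_one] using key.symm
      _ ≤ (d * (m + 1)) * d ^ m := Nat.mul_le_mul hle h
      _ = d ^ (m + 1) * (m + 1) := by ring
  have : Nat.choose (m + d + 1) (m + 1) ≤ d ^ (m + 1) :=
    Nat.le_of_mul_le_mul_right h1 (by omega)
  simpa [Nat.add_right_comm] using this

lemma bound3 (d : ℕ) (hd : 3 ≤ d) : ∀ m, 3 ≤ m → Nat.choose (m + d) m ≤ d ^ m := by
  intro m hm
  induction m, hm using Nat.le_induction with
  | base =>
    rw [show (3 : ℕ) + d = d + 3 by omega]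
    have h := six_mul_choose d
    obtain ⟨e, rfl⟩ : ∃ e, d = e + 3 := ⟨d - 3, by omega⟩
    nlinarith [h, Nat.zero_le (e^3), Nat.zero_le (e^2), Nat.zero_le e]
  | succ m hm ih => exact step m d (by omega) (by omega) ih

lemma bound2 : ∀ m, 4 ≤ m → Nat.choose (m + 2) m ≤ 2 ^ m := by
  intro m hm
  induction m, hm using Nat.le_induction with
  | base => decide
  | succ m hm ih => exact step m 2 (by omega) (by omega) ih

lemma key_lemma (m d : ℕ) (hm : 2 ≤ m) (hd : 2 ≤ d) (hex : ¬(m = 2 ∧ d = 2)) :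
    Nat.choose (m + d) d < d ^ m + m := by
  rw [choose_sym]
  rcases Nat.lt_or_ge m 3 with h3 | h3
  · -- m = 2, so d ≥ 3
    have hm2 : m = 2 := by omega
    subst hm2
    have hd3 : 3 ≤ d := by omega
    rw [show (2 : ℕ) + d = d + 2 by omega]
    have h := two_mul_choose d
    obtain ⟨e, rfl⟩ : ∃ e, d = e + 3 := ⟨d - 3, by omega⟩
    nlinarith [h, Nat.zero_le (e^2), Nat.zero_le e]
  · rcases Nat.lt_or_ge m 4 with h4 | h4
    · -- m = 3
      have hm3 : m = 3 := by omega
      subst hm3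
      rw [show (3 : ℕ) + d = d + 3 by omega]
      have h := six_mul_choose d
      obtain ⟨e, rfl⟩ : ∃ e, d = e + 2 := ⟨d - 2, by omega⟩
      nlinarith [h, Nat.zero_le (e^3), Nat.zero_le (e^2), Nat.zero_le e]
    · rcases Nat.lt_or_ge d 3 with hd2 | hd3
      · have hd2' : d = 2 := by omega
        subst hd2'
        have := bound2 m h4
        omega
      · have := bound3 d hd3 m (by omega)
        omega

theorem stmt_9 (n d : ℕ) (hn : 2 ≤ n) (hd : 2 ≤ d) :
    ((d : ℤ) ^ (n - 1) - (Nat.choose (n + d - 1) d : ℤ) + (n : ℤ) - 1 = 0)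
      ↔ (n = 2 ∨ (n = 3 ∧ d = 2)) := by
  obtain ⟨m, rfl⟩ : ∃ m, n = m + 2 := ⟨n - 2, by omega⟩
  have e1 : m + 2 - 1 = m + 1 := by omega
  have e2 : m + 2 + d - 1 = m + 1 + d := by omega
  rw [e1, e2]
  have cast_iff : ((d : ℤ) ^ (m + 1) - (Nat.choose (m + 1 + d) d : ℤ) + (↑(m + 2) : ℤ) - 1 = 0)
      ↔ (d ^ (m + 1) + (m + 1) = Nat.choose (m + 1 + d) d) := by
    constructor
    · intro h
      have : ((d ^ (m + 1) + (m + 1) : ℕ) : ℤ) = (Nat.choose (m + 1 + d) d : ℤ) := by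
        push_cast at h ⊢; linarith
      exact_mod_cast this
    · intro h
      have : ((d ^ (m + 1) + (m + 1) : ℕ) : ℤ) = (Nat.choose (m + 1 + d) d : ℤ) := by
        exact_mod_cast h
      push_cast at this ⊢; linarith
  rw [cast_iff]
  constructor
  · intro h
    rcases Nat.eq_zero_or_pos m with rfl | hm
    · left; rfl
    · right
      by_contra hc
      push_neg at hc
      have hex : ¬(m + 1 = 2 ∧ d = 2) := by
        intro ⟨h1, h2⟩; exact (hc (by omega)) h2
      have := key_lemma (m + 1) d (by omega) hd hex
      omega
  · rintro (h | ⟨h1, h2⟩)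
    · have hm : m = 0 := by omega
      subst hm
      rw [show 0 + 1 + d = 1 + d by omega, choose_sym 1 d, Nat.choose_one_right]
      simp only [Nat.zero_add, pow_one]
      omega
    · have hm : m = 1 := by omega
      subst hm; subst h2
      decide
end

section
/- For all integers n ≥ 4 and d ≥ 2, d^{n-1} > C(n+d-1, d) - n + 1. -/
lemma two_choose_two (n : ℕ) : 2 * Nat.choose (n + 2) 2 = (n + 1) * (n + 2) := by
  induction n with
  | zero => decide
  | succ k ih =>
    have h := Nat.choose_succ_succ' (k + 2) 1
    norm_num at h
    rw [show k + 1 + 2 = k + 2 + 1 from rfl, h, Nat.mul_add, ih]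
    ring
lemma six_choose_three (n : ℕ) : 6 * Nat.choose (n + 3) 3 = (n + 1) * (n + 2) * (n + 3) := by
  induction n with
  | zero => decide
  | succ k ih =>
    have h := Nat.choose_succ_succ' (k + 3) 2
    norm_num at h
    have h2 := two_choose_two (k + 1)
    rw [show k + 1 + 2 = k + 3 from rfl] at h2
    rw [show k + 1 + 3 = k + 3 + 1 from rfl, h, Nat.mul_add, ih,
      show (6 : ℕ) = 3 * 2 from rfl, Nat.mul_assoc, h2]
    ring

lemma aux (k d : ℕ) (hd : 2 ≤ d) : Nat.choose (k + d + 3) d < d ^ (k + 3) + k + 3 := by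
  induction k with
  | zero =>
    have hsym : Nat.choose (d + 3) (d + 3 - 3) = Nat.choose (d + 3) 3 :=
      Nat.choose_symm (by omega)
    rw [show d + 3 - 3 = d from rfl] at hsym
    have h6 := six_choose_three d
    have hlt : 6 * Nat.choose (d + 3) 3 < 6 * (d ^ 3 + 3) := by
      rw [h6]; nlinarith [sq_nonneg d, hd]
    have := Nat.lt_of_mul_lt_mul_left hlt
    simpa [hsym] using this
  | succ k ih =>
    have key := Nat.choose_mul_succ_eq (k + d + 3) d
    rw [show k + d + 3 + 1 = k + d + 4 from rfl, show k + d + 3 + 1 - d = k + 4 from by omega] at key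
    have hA : d ≤ d ^ (k + 3) := Nat.le_self_pow (by omega) d
    have hle : Nat.choose (k + d + 3) d ≤ d ^ (k + 3) + k + 2 := by omega
    have hmul : Nat.choose (k + d + 4) d * (k + 4) ≤ (d ^ (k + 3) + k + 2) * (k + d + 4) := by
      rw [← key]; exact Nat.mul_le_mul_right _ hle
    have hstep : (d ^ (k + 3) + k + 2) * (k + d + 4) < (d ^ (k + 4) + k + 4) * (k + 4) := by
      zify
      have hA' : (d : ℤ) ≤ (d : ℤ) ^ (k + 3) := by exact_mod_cast hA
      have hd' : (2 : ℤ) ≤ (d : ℤ) := by exact_mod_cast hd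
      have hK : (0 : ℤ) ≤ (k : ℤ) := by positivity
      have h2 : (0 : ℤ) ≤ ((k : ℤ) + 3) * d - k - 4 := by nlinarith
      have p1 := mul_le_mul_of_nonneg_right hA' h2
      have hpow : (d : ℤ) ^ (k + 4) = d * (d : ℤ) ^ (k + 3) := by ring
      rw [hpow]
      nlinarith [p1, mul_nonneg (sub_nonneg.2 hd') hK, mul_nonneg (mul_nonneg (sub_nonneg.2 hd') (sub_nonneg.2 hd')) hK]
    have := Nat.lt_of_mul_lt_mul_right (Nat.lt_of_le_of_lt hmul hstep)
    calc Nat.choose (k + 1 + d + 3) d = Nat.choose (k + d + 4) d := by ring_nf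
    _ < d ^ (k + 4) + k + 4 := this
    _ = d ^ (k + 1 + 3) + (k + 1) + 3 := by ring_nf

theorem stmt_12 (n d : ℕ) (hn : 4 ≤ n) (hd : 2 ≤ d) :
    (Nat.choose (n + d - 1) d : ℤ) - (n : ℤ) + 1 < (d : ℤ) ^ (n - 1) := by
  obtain ⟨k, rfl⟩ : ∃ k, n = k + 4 := ⟨n - 4, by omega⟩
  rw [show k + 4 + d - 1 = k + d + 3 from by omega, show k + 4 - 1 = k + 3 from rfl]
  have h := aux k d hd
  have h' : (Nat.choose (k + d + 3) d : ℤ) < (d : ℤ) ^ (k + 3) + k + 3 := by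
    exact_mod_cast h
  push_cast
  linarith
end

section
/- Let a, b, r, s be positive integers with a ≤ b, and in the polynomial ring K[x₁, x₂] let I = (x₁^a, x₂^a)^r and J = (x₁^b, x₂^b)^s. Then IJ = (x₁^c, x₂^c)^t for some positive integers c, t if and only if b = ka for some positive integer k with r ≥ k - 1. -/
open MvPolynomial
open Pointwise

namespace Stmt13Aux

/-- exponent pair as a `Fin 2 →₀ ℕ` -/
noncomputable def D (u v : ℕ) : Fin 2 →₀ ℕ := Finsupp.single 0 u + Finsupp.single 1 v

lemma D_apply0 (u v : ℕ) : D u v 0 = u := by simp [D]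
lemma D_apply1 (u v : ℕ) : D u v 1 = v := by
  simp [D, Finsupp.single_apply]

lemma D_add (u v u' v' : ℕ) : D u v + D u' v' = D (u + u') (v + v') := by
  simp only [D, Finsupp.single_add]
  abel

lemma D_le {u v u' v' : ℕ} : D u v ≤ D u' v' ↔ u ≤ u' ∧ v ≤ v' := by
  constructor
  · intro h
    exact ⟨by simpa [D_apply0] using h 0, by simpa [D_apply1] using h 1⟩
  · rintro ⟨h1, h2⟩ i
    fin_cases i <;> simpa [D_apply0, D_apply1]

variable {K : Type*} [Field K]

/-- monomial with exponent pair -/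
noncomputable def mon (K : Type*) [Field K] : (Fin 2 →₀ ℕ) → MvPolynomial (Fin 2) K :=
  fun p => monomial p (1 : K)

lemma span_mon_mul (A B : Set (Fin 2 →₀ ℕ)) :
    Ideal.span (mon K '' A) * Ideal.span (mon K '' B) = Ideal.span (mon K '' (A + B)) := by
  rw [Ideal.span_mul_span']
  congr 1
  ext x
  simp only [Set.mem_mul, Set.mem_image, Set.mem_add]
  constructor
  · rintro ⟨-, ⟨p, hp, rfl⟩, -, ⟨q, hq, rfl⟩, rfl⟩
    exact ⟨p + q, ⟨p, hp, q, hq, rfl⟩, by simp [mon, monomial_mul]⟩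
  · rintro ⟨-, ⟨p, hp, q, hq, rfl⟩, rfl⟩
    exact ⟨mon K p, ⟨p, hp, rfl⟩, mon K q, ⟨q, hq, rfl⟩, by simp [mon, monomial_mul]⟩

lemma mem_span_mon {A : Set (Fin 2 →₀ ℕ)} {u v : ℕ} :
    mon K (D u v) ∈ Ideal.span (mon K '' A) ↔ ∃ p ∈ A, p ≤ D u v := by
  rw [show mon K (D u v) = monomial (D u v) (1:K) from rfl,
    show mon K '' A = (fun s => monomial s (1:K)) '' A from rfl,
    mem_ideal_span_monomial_image]
  simp [support_monomial]

/-- the exponent set of `(x^a, y^a)^r` -/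
def E (c t : ℕ) : Set (Fin 2 →₀ ℕ) := {p | ∃ m ≤ t, p = D (m * c) ((t - m) * c)}

lemma span_pow (c t : ℕ) :
    (Ideal.span ({X 0 ^ c, X 1 ^ c} : Set (MvPolynomial (Fin 2) K))) ^ t =
      Ideal.span (mon K '' E c t) := by
  have hbase : ({X 0 ^ c, X 1 ^ c} : Set (MvPolynomial (Fin 2) K)) =
      mon K '' {D c 0, D 0 c} := by
    simp only [Set.image_insert_eq, Set.image_singleton, mon, X_pow_eq_monomial]
    congr 2 <;> simp [D]
  induction t with
  | zero =>
    have : E c 0 = {D 0 0} := by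
      ext p
      simp only [E, Set.mem_setOf_eq, Set.mem_singleton_iff]
      constructor
      · rintro ⟨m, hm, rfl⟩
        interval_cases m
        simp
      · rintro rfl; exact ⟨0, le_refl _, by simp⟩
    rw [pow_zero, this]
    have : mon K (D 0 0) = 1 := by simp [mon, D]
    rw [Set.image_singleton, this, Ideal.span_singleton_one, Ideal.one_eq_top]
  | succ n ih =>
    rw [pow_succ, ih, hbase, span_mon_mul]
    have hset : E c n + ({D c 0, D 0 c} : Set (Fin 2 →₀ ℕ)) = E c (n + 1) := by
      ext p
      rw [Set.mem_add]
      constructor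
      · rintro ⟨x, ⟨m, hm, rfl⟩, q, hq, rfl⟩
        rcases hq with rfl | rfl
        · refine ⟨m + 1, by omega, ?_⟩
          rw [D_add]
          have h1 : (m + 1) * c = m * c + c := by ring
          have h2 : (n + 1 - (m + 1)) = n - m := by omega
          rw [h1, h2]
          simp
        · refine ⟨m, by omega, ?_⟩
          rw [D_add]
          have h2 : (n + 1 - m) * c = (n - m) * c + c := by
            have : n + 1 - m = (n - m) + 1 := by omega
            rw [this]; ring
          rw [h2]
          simp
      · rintro ⟨m, hm, rfl⟩
        rcases Nat.lt_or_ge m (n + 1) with h | h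
        · refine ⟨D (m * c) ((n - m) * c), ⟨m, by omega, rfl⟩, D 0 c,
            Or.inr rfl, ?_⟩
          rw [D_add]
          have : (n + 1 - m) * c = (n - m) * c + c := by
            have : n + 1 - m = (n - m) + 1 := by omega
            rw [this]; ring
          rw [this]
          simp
        · have hm' : m = n + 1 := by omega
          subst hm'
          refine ⟨D (n * c) ((n - n) * c), ⟨n, le_refl _, rfl⟩, D c 0,
            Or.inl rfl, ?_⟩
          rw [D_add]
          have h1 : (n + 1) * c = n * c + c := by ring
          rw [h1]
          simp
    rw [hset]

end Stmt13Aux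

namespace Stmt13Aux

variable {K : Type*} [Field K]

/-- exponent set of the product ideal -/
def EP (a b r s : ℕ) : Set (Fin 2 →₀ ℕ) :=
  {p | ∃ i ≤ r, ∃ j ≤ s, p = D (i * a + j * b) ((r - i) * a + (s - j) * b)}

lemma E_add_E (a b r s : ℕ) : E a r + E b s = EP a b r s := by
  ext p
  rw [Set.mem_add]
  constructor
  · rintro ⟨x, ⟨i, hi, rfl⟩, y, ⟨j, hj, rfl⟩, rfl⟩
    exact ⟨i, hi, j, hj, by rw [D_add]⟩
  · rintro ⟨i, hi, j, hj, rfl⟩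
    exact ⟨D (i * a) ((r - i) * a), ⟨i, hi, rfl⟩, D (j * b) ((s - j) * b),
      ⟨j, hj, rfl⟩, by rw [D_add]⟩

lemma main_eq (a b r s : ℕ) :
    (Ideal.span ({X 0 ^ a, X 1 ^ a} : Set (MvPolynomial (Fin 2) K))) ^ r *
      (Ideal.span ({X 0 ^ b, X 1 ^ b} : Set (MvPolynomial (Fin 2) K))) ^ s =
      Ideal.span (mon K '' EP a b r s) := by
  rw [span_pow, span_pow, span_mon_mul, E_add_E]

lemma mem_span_E {c t u v : ℕ} :
    mon K (D u v) ∈ Ideal.span (mon K '' E c t) ↔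
      ∃ m ≤ t, m * c ≤ u ∧ (t - m) * c ≤ v := by
  rw [mem_span_mon]
  constructor
  · rintro ⟨p, ⟨m, hm, rfl⟩, hle⟩
    exact ⟨m, hm, D_le.mp hle⟩
  · rintro ⟨m, hm, h1, h2⟩
    exact ⟨D (m * c) ((t - m) * c), ⟨m, hm, rfl⟩, D_le.mpr ⟨h1, h2⟩⟩

lemma mem_span_EP {a b r s u v : ℕ} :
    mon K (D u v) ∈ Ideal.span (mon K '' EP a b r s) ↔
      ∃ i ≤ r, ∃ j ≤ s, i * a + j * b ≤ u ∧ (r - i) * a + (s - j) * b ≤ v := by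
  rw [mem_span_mon]
  constructor
  · rintro ⟨p, ⟨i, hi, j, hj, rfl⟩, hle⟩
    exact ⟨i, hi, j, hj, D_le.mp hle⟩
  · rintro ⟨i, hi, j, hj, h1, h2⟩
    exact ⟨_, ⟨i, hi, j, hj, rfl⟩, D_le.mpr ⟨h1, h2⟩⟩

end Stmt13Aux

namespace Stmt13Aux

lemma sub_mul_add {x y z : ℕ} (h : y ≤ x) : (x - y) * z + y * z = x * z := by
  rw [← Nat.add_mul, Nat.sub_add_cancel h]

lemma arith_fwd (a b r s c t : ℕ) (ha : 0 < a) (hb : 0 < b) (hr : 0 < r) (hs : 0 < s)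
    (hab : a ≤ b) (hc : 0 < c) (ht : 0 < t)
    (h : ∀ u v, (∃ i ≤ r, ∃ j ≤ s, i * a + j * b ≤ u ∧ (r - i) * a + (s - j) * b ≤ v) ↔
      (∃ m ≤ t, m * c ≤ u ∧ (t - m) * c ≤ v)) :
    ∃ k, 0 < k ∧ b = k * a ∧ k - 1 ≤ r := by
  have htc1 : t * c ≤ r * a + s * b := by
    obtain ⟨m, hm, h1, h2⟩ := (h (r * a + s * b) 0).mp
      ⟨r, le_rfl, s, le_rfl, le_rfl, by simp⟩
    have hm' : m = t := by
      by_contra hne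
      have : 0 < (t - m) * c := Nat.mul_pos (by omega) hc
      omega
    rwa [hm'] at h1
  have htc2 : r * a + s * b ≤ t * c := by
    obtain ⟨i, hi, j, hj, h1, h2⟩ := (h (t * c) 0).mpr ⟨t, le_rfl, le_rfl, by simp⟩
    have hia : (r - i) * a = 0 := by omega
    have hjb : (s - j) * b = 0 := by omega
    have hir : i = r := by
      rcases Nat.mul_eq_zero.mp hia with h' | h' <;> omega
    have hjs : j = s := by
      rcases Nat.mul_eq_zero.mp hjb with h' | h' <;> omega
    rw [hir, hjs] at h1
    exact h1
  have htc : t * c = r * a + s * b := le_antisymm htc1 htc2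
  have hca : c ≤ a := by
    obtain ⟨m, hm, h1, h2⟩ := (h a ((r - 1) * a + s * b)).mp
      ⟨1, hr, 0, Nat.zero_le _, by simp, by simp⟩
    have hm1 : 0 < m := by
      rcases Nat.eq_zero_or_pos m with rfl | h'
      · exfalso
        simp only [Nat.sub_zero] at h2
        have e : (r - 1) * a + 1 * a = r * a := sub_mul_add hr
        omega
      · exact h'
    have : c ≤ m * c := Nat.le_mul_of_pos_left c hm1
    omega
  have hac : a ≤ c := by
    obtain ⟨i, hi, j, hj, h1, h2⟩ := (h c ((t - 1) * c)).mpr ⟨1, ht, by simp, by simp⟩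
    rcases Nat.eq_zero_or_pos (i + j) with hij | hij
    · exfalso
      have hi0 : i = 0 := by omega
      have hj0 : j = 0 := by omega
      rw [hi0, hj0] at h2
      simp only [Nat.sub_zero] at h2
      have e : (t - 1) * c + 1 * c = t * c := sub_mul_add ht
      omega
    · rcases Nat.eq_zero_or_pos i with hi0 | hi0
      · have hj0 : 0 < j := by omega
        have : b ≤ j * b := Nat.le_mul_of_pos_left b hj0
        omega
      · have : a ≤ i * a := Nat.le_mul_of_pos_left a hi0
        omega
  have hceq : c = a := le_antisymm hca hac
  subst hceq
  obtain ⟨m, hm, h1, h2⟩ := (h b (r * c + (s - 1) * b)).mp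
    ⟨0, Nat.zero_le _, 1, hs, by simp, by simp⟩
  have e1 : (t - m) * c + m * c = t * c := sub_mul_add hm
  have e2 : (s - 1) * b + 1 * b = s * b := sub_mul_add hs
  have key : b ≤ m * c := by omega
  have hbm : b = m * c := le_antisymm key h1
  have hm0 : 0 < m := by
    rcases Nat.eq_zero_or_pos m with rfl | h'
    · simp at hbm; omega
    · exact h'
  refine ⟨m, hm0, hbm, ?_⟩
  by_contra hcon
  push_neg at hcon
  have hm2 : r + 2 ≤ m := by omega
  have htm : t = r + s * m := by
    have e : t * c = (r + s * m) * c := by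
      rw [htc, hbm]; ring
    exact Nat.eq_of_mul_eq_mul_right hc e
  have hsm : m ≤ s * m := Nat.le_mul_of_pos_left m hs
  have htr : r + 1 ≤ t := by omega
  obtain ⟨i, hi, j, hj, h1, h2⟩ :=
    (h ((r + 1) * c) ((t - (r + 1)) * c)).mpr ⟨r + 1, htr, le_rfl, le_rfl⟩
  have c1 : i + j * m ≤ r + 1 := by
    refine Nat.le_of_mul_le_mul_right ?_ hc
    calc (i + j * m) * c = i * c + j * b := by rw [hbm]; ring
    _ ≤ (r + 1) * c := h1
  have c2 : (r - i) + (s - j) * m ≤ t - (r + 1) := by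
    refine Nat.le_of_mul_le_mul_right ?_ hc
    calc ((r - i) + (s - j) * m) * c = (r - i) * c + (s - j) * b := by rw [hbm]; ring
    _ ≤ (t - (r + 1)) * c := h2
  have e3 : (s - j) * m + j * m = s * m := sub_mul_add hj
  have hjm : j = 0 ∨ m ≤ j * m := by
    rcases Nat.eq_zero_or_pos j with rfl | hj'
    · left; rfl
    · right; exact Nat.le_mul_of_pos_left m hj'
  rcases hjm with rfl | hjm' <;> omega

end Stmt13Aux

namespace Stmt13Aux

variable {K : Type*} [Field K]

lemma arith_rev (a r s k : ℕ) (ha : 0 < a) (hr : 0 < r) (hs : 0 < s)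
    (hk : 0 < k) (hkr : k - 1 ≤ r) :
    Ideal.span (mon K '' EP a (k * a) r s) =
      Ideal.span (mon K '' E a (r + k * s)) := by
  apply le_antisymm
  · rw [Ideal.span_le]
    rintro x ⟨p, ⟨i, hi, j, hj, rfl⟩, rfl⟩
    rw [SetLike.mem_coe, mem_span_E]
    refine ⟨i + j * k, ?_, ?_, ?_⟩
    · have : j * k ≤ s * k := Nat.mul_le_mul_right k hj
      have hcomm : k * s = s * k := Nat.mul_comm k s
      omega
    · calc (i + j * k) * a = i * a + j * (k * a) := by ring
      _ ≤ _ := le_rfl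
    · have hjk : j * k ≤ s * k := Nat.mul_le_mul_right k hj
      have e : r + k * s - (i + j * k) = (r - i) + (s - j) * k := by
        have e2 : (s - j) * k + j * k = s * k := sub_mul_add hj
        have hcomm : k * s = s * k := Nat.mul_comm k s
        omega
      calc (r + k * s - (i + j * k)) * a = ((r - i) + (s - j) * k) * a := by rw [e]
      _ = (r - i) * a + (s - j) * (k * a) := by ring
      _ ≤ _ := le_rfl
  · rw [Ideal.span_le]
    rintro x ⟨p, ⟨m, hm, rfl⟩, rfl⟩
    rw [SetLike.mem_coe, mem_span_EP]
    -- choose j = min (m / k) s, i = m - j*k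
    set j := min (m / k) s with hjdef
    set i := m - j * k with hidef
    have hjs : j ≤ s := min_le_right _ _
    have hjk : j * k ≤ m := by
      rcases le_total (m / k) s with h' | h'
      · have : j = m / k := by rw [hjdef]; omega
        rw [this]
        exact Nat.div_mul_le_self m k
      · have hj' : j = s := by rw [hjdef]; omega
        rw [hj']
        have := Nat.div_mul_le_self m k
        have hsk : s * k ≤ (m / k) * k := Nat.mul_le_mul_right k h'
        omega
    have hir : i ≤ r := by
      rcases le_total (m / k) s with h' | h'
      · have hj' : j = m / k := by rw [hjdef]; omega
        have hcm : k * (m / k) = (m / k) * k := Nat.mul_comm _ _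
        have h5 := Nat.div_add_mod m k
        have h6 : m % k < k := Nat.mod_lt m hk
        rw [hidef, hj']
        omega
      · have hj' : j = s := by rw [hjdef]; omega
        have : k * s ≤ j * k := by rw [hj', Nat.mul_comm]
        rw [hidef]
        omega
    have him : i + j * k = m := by omega
    refine ⟨i, hir, j, hjs, ?_, ?_⟩
    · calc i * a + j * (k * a) = (i + j * k) * a := by ring
      _ = m * a := by rw [him]
      _ ≤ m * a := le_rfl
    · have e2 : (s - j) * k + j * k = s * k := sub_mul_add hjs
      have e : (r - i) + (s - j) * k = r + k * s - m := by
        have hcomm : k * s = s * k := Nat.mul_comm k s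
        omega
      calc (r - i) * a + (s - j) * (k * a) = ((r - i) + (s - j) * k) * a := by ring
      _ = (r + k * s - m) * a := by rw [e]
      _ ≤ (r + k * s - m) * a := le_rfl

end Stmt13Aux



theorem stmt_13 {K : Type*} [Field K] (a b r s : ℕ)
    (ha : 0 < a) (hb : 0 < b) (hr : 0 < r) (hs : 0 < s) (hab : a ≤ b) :
    ((Ideal.span ({X 0 ^ a, X 1 ^ a} : Set (MvPolynomial (Fin 2) K))) ^ r *
        (Ideal.span ({X 0 ^ b, X 1 ^ b} : Set (MvPolynomial (Fin 2) K))) ^ s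
      ∈ {P : Ideal (MvPolynomial (Fin 2) K) |
          ∃ c t : ℕ, 0 < c ∧ 0 < t ∧
            P = (Ideal.span ({X 0 ^ c, X 1 ^ c} : Set (MvPolynomial (Fin 2) K))) ^ t})
    ↔ ∃ k : ℕ, 0 < k ∧ b = k * a ∧ k - 1 ≤ r := by
  rw [Set.mem_setOf_eq]
  constructor
  · rintro ⟨c, t, hc, ht, hP⟩
    rw [Stmt13Aux.main_eq, Stmt13Aux.span_pow] at hP
    apply Stmt13Aux.arith_fwd a b r s c t ha hb hr hs hab hc ht
    intro u v
    rw [← Stmt13Aux.mem_span_EP (K := K), ← Stmt13Aux.mem_span_E (K := K), hP]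
  · rintro ⟨k, hk, rfl, hkr⟩
    refine ⟨a, r + k * s, ha, by positivity, ?_⟩
    rw [Stmt13Aux.main_eq, Stmt13Aux.span_pow]
    exact Stmt13Aux.arith_rev a r s k ha hr hs hk hkr
end

section
/- Let n ≥ 2 and d ≥ 1, and let J = (x₁^d, …, x_n^d) and L a monomial ideal generated by monomials u₁, …, u_t of degree d, none divisible by any x_i^d. Then x_i^d · u_j = x_k^d · u_l implies i = k and j = l; consequently the products x_i^d u_j for 1 ≤ i ≤ n, 1 ≤ j ≤ t are pairwise distinct, so μ(JL) = nt. -/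
theorem stmt_16 (n t d : ℕ) (hn : 2 ≤ n) (hd : 1 ≤ d)
    (u : Fin t → Fin n → ℕ) (hu : Function.Injective u)
    (hdeg : ∀ j, ∑ i, u j i = d) (hlt : ∀ j i, u j i < d) :
    (∀ (i k : Fin n) (j l : Fin t),
        (fun x => (if x = i then d else 0) + u j x)
          = (fun x => (if x = k then d else 0) + u l x) → i = k ∧ j = l)
    ∧ Function.Injective
        (fun p : Fin n × Fin t => fun x => (if x = p.1 then d else 0) + u p.2 x)
    ∧ (Finset.image
        (fun p : Fin n × Fin t => fun x => (if x = p.1 then d else 0) + u p.2 x)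
        Finset.univ).card = n * t := by
  have key : ∀ (i k : Fin n) (j l : Fin t),
      (fun x => (if x = i then d else 0) + u j x)
        = (fun x => (if x = k then d else 0) + u l x) → i = k ∧ j = l := by
    intro i k j l h
    have hik : i = k := by
      by_contra hne
      have h1 := congrFun h i
      simp [hne] at h1
      have := hlt l i
      omega
    subst hik
    refine ⟨rfl, hu ?_⟩
    funext x
    have h1 := congrFun h x
    rcases eq_or_ne x i with rfl | hx
    · simp at h1; omega
    · simpa [hx] using h1
  have hinj : Function.Injective
      (fun p : Fin n × Fin t => fun x => (if x = p.1 then d else 0) + u p.2 x) := by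
    intro p q h
    obtain ⟨h1, h2⟩ := key p.1 q.1 p.2 q.2 h
    exact Prod.ext h1 h2
  refine ⟨key, hinj, ?_⟩
  rw [Finset.card_image_of_injective _ hinj]
  simp [Finset.card_univ]
end

section
/- Let d ≥ 2 and let u = x₁^{a₁}⋯x_m^{a_m} be a monomial with 0 < a_i < d for all i and Σ a_i = d. Then u^{d-1} = (x₁^d)^{a₁-1}⋯(x_m^d)^{a_m-1}·x₁^{d-a₁}⋯x_m^{d-a_m}, and u^{d-1} lies in J^{d-m} but not in J^{d-m+1}, where J = (x₁^d, …, x_m^d). -/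
open MvPolynomial Pointwise

private lemma aux_prod_pow_mem {R : Type*} [CommRing R] (I : Ideal R) {ι : Type*}
    (s : Finset ι) (f : ι → R) (e : ι → ℕ) (h : ∀ i ∈ s, f i ∈ I) :
    (∏ i ∈ s, f i ^ e i) ∈ I ^ (∑ i ∈ s, e i) := by
  induction s using Finset.cons_induction with
  | empty => simp
  | cons i s hi ih =>
    rw [Finset.prod_cons, Finset.sum_cons, pow_add]
    exact Ideal.mul_mem_mul (Ideal.pow_mem_pow (h i (Finset.mem_cons_self ..)) _)
      (ih fun j hj => h j (Finset.mem_cons_of_mem hj))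

private lemma aux_prod_X_pow {K : Type*} [Field K] {m : ℕ} (g : Fin m → ℕ) :
    (∏ i, (X i : MvPolynomial (Fin m) K) ^ g i)
      = monomial (Finsupp.equivFunOnFinite.symm g) 1 := by
  rw [← prod_X_pow_eq_monomial]
  exact (Finset.prod_subset (Finset.subset_univ _) fun i _ hi => by
    have h0 : g i = 0 := Finsupp.notMem_support_iff.mp hi
    rw [h0, pow_zero]).symm

private def auxS (m d k : ℕ) : Set (Fin m →₀ ℕ) :=
  {e | ∃ b : Fin m → ℕ, (∑ i, b i) = k ∧ ∀ i, e i = d * b i}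

private lemma mem_auxS {m d k : ℕ} {e : Fin m →₀ ℕ} (b : Fin m → ℕ)
    (h1 : ∑ i, b i = k) (h2 : ∀ i, e i = d * b i) : e ∈ auxS m d k := ⟨b, h1, h2⟩

theorem stmt_17 {K : Type*} [Field K] (m d : ℕ) (hd : 2 ≤ d) (a : Fin m → ℕ)
    (hpos : ∀ i, 0 < a i) (hlt : ∀ i, a i < d) (hsum : ∑ i, a i = d) :
    ((∏ i, (X i : MvPolynomial (Fin m) K) ^ a i) ^ (d - 1)
        = (∏ i, ((X i : MvPolynomial (Fin m) K) ^ d) ^ (a i - 1))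
            * ∏ i, (X i : MvPolynomial (Fin m) K) ^ (d - a i))
    ∧ (∏ i, (X i : MvPolynomial (Fin m) K) ^ a i) ^ (d - 1)
        ∈ (Ideal.span (Set.range fun i => (X i : MvPolynomial (Fin m) K) ^ d)) ^ (d - m)
    ∧ (∏ i, (X i : MvPolynomial (Fin m) K) ^ a i) ^ (d - 1)
        ∉ (Ideal.span (Set.range fun i => (X i : MvPolynomial (Fin m) K) ^ d)) ^ (d - m + 1) := by
  set J : Ideal (MvPolynomial (Fin m) K) :=
    Ideal.span (Set.range fun i => (X i : MvPolynomial (Fin m) K) ^ d) with hJ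
  have hm : m ≤ d := by
    calc m = ∑ _i : Fin m, 1 := by simp
    _ ≤ ∑ i, a i := Finset.sum_le_sum fun i _ => hpos i
    _ = d := hsum
  have hsub : ∑ i, (a i - 1) = d - m := by
    have h1 : ∑ i, ((a i - 1) + 1) = ∑ i, a i :=
      Finset.sum_congr rfl fun i _ => Nat.sub_add_cancel (hpos i)
    rw [Finset.sum_add_distrib] at h1
    simp only [Finset.sum_const, Finset.card_univ, Fintype.card_fin, smul_eq_mul, mul_one] at h1
    omega
  -- Part 1
  have h1 : (∏ i, (X i : MvPolynomial (Fin m) K) ^ a i) ^ (d - 1)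
      = (∏ i, ((X i : MvPolynomial (Fin m) K) ^ d) ^ (a i - 1))
          * ∏ i, (X i : MvPolynomial (Fin m) K) ^ (d - a i) := by
    rw [← Finset.prod_pow, ← Finset.prod_mul_distrib]
    refine Finset.prod_congr rfl fun i _ => ?_
    rw [← pow_mul, ← pow_mul, ← pow_add]
    congr 1
    have h1' : 1 ≤ d := by omega
    have h2' : 1 ≤ a i := hpos i
    have h3' : a i ≤ d := le_of_lt (hlt i)
    zify [h1', h2', h3']
    ring
  refine ⟨h1, ?_, ?_⟩
  -- Part 2
  · rw [h1]
    refine Ideal.mul_mem_right _ _ ?_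
    have := aux_prod_pow_mem J Finset.univ (fun i => (X i : MvPolynomial (Fin m) K) ^ d)
      (fun i => a i - 1) (fun i _ => Ideal.subset_span ⟨i, rfl⟩)
    rwa [hsub] at this
  -- Part 3
  · intro hmem
    set c : Fin m →₀ ℕ := Finsupp.equivFunOnFinite.symm (fun i => (d - 1) * a i) with hc
    have hu : (∏ i, (X i : MvPolynomial (Fin m) K) ^ a i) ^ (d - 1) = monomial c 1 := by
      have hcc : ((d - 1) • Finsupp.equivFunOnFinite.symm a : Fin m →₀ ℕ) = c := by
        ext i; simp [hc, mul_comm]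
      rw [aux_prod_X_pow, monomial_pow, one_pow, hcc]
    have hJ1 : J ≤ Ideal.span ((fun e => monomial e (1 : K)) '' auxS m d 1) := by
      rw [hJ, Ideal.span_le]
      rintro p ⟨i, rfl⟩
      have he : Finsupp.single i d ∈ auxS m d 1 :=
        mem_auxS (fun j => if j = i then 1 else 0) (by simp)
          (fun j => by simp [Finsupp.single_apply, eq_comm])
      have : (X i : MvPolynomial (Fin m) K) ^ d = monomial (Finsupp.single i d) 1 :=
        X_pow_eq_monomial
      show (X i : MvPolynomial (Fin m) K) ^ d ∈ _
      rw [this]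
      exact Ideal.subset_span (Set.mem_image_of_mem _ he)
    have hJk : ∀ k, J ^ k ≤ Ideal.span ((fun e => monomial e (1 : K)) '' auxS m d k) := by
      intro k
      induction k with
      | zero =>
        rw [pow_zero, Ideal.one_eq_top]
        refine ((Ideal.eq_top_iff_one _).mpr ?_).ge
        have he : (0 : Fin m →₀ ℕ) ∈ auxS m d 0 := mem_auxS 0 (by simp) (by simp)
        have : (1 : MvPolynomial (Fin m) K) = monomial 0 1 := by simp
        rw [this]
        exact Ideal.subset_span (Set.mem_image_of_mem _ he)
      | succ k ih =>
        rw [pow_succ]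
        calc J ^ k * J ≤ Ideal.span ((fun e => monomial e (1 : K)) '' auxS m d k)
              * Ideal.span ((fun e => monomial e (1 : K)) '' auxS m d 1) := Ideal.mul_mono ih hJ1
          _ = Ideal.span (((fun e => monomial e (1 : K)) '' auxS m d k)
              * ((fun e => monomial e (1 : K)) '' auxS m d 1)) := Ideal.span_mul_span' _ _
          _ ≤ Ideal.span ((fun e => monomial e (1 : K)) '' auxS m d (k + 1)) := by
            refine Ideal.span_mono ?_
            rintro p ⟨_, ⟨e, he, rfl⟩, _, ⟨f, hf, rfl⟩, rfl⟩
            obtain ⟨b, hb1, hb2⟩ := he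
            obtain ⟨b', hb1', hb2'⟩ := hf
            have hef : e + f ∈ auxS m d (k + 1) :=
              mem_auxS (b + b') (by simp [Finset.sum_add_distrib, hb1, hb1'])
                (fun i => by simp [hb2 i, hb2' i, Nat.mul_add])
            have : monomial e (1 : K) * monomial f 1 = monomial (e + f) 1 := by
              simp [monomial_mul]
            show monomial e (1 : K) * monomial f 1 ∈ _
            rw [this]
            exact Set.mem_image_of_mem _ hef
    have hmem' := hJk (d - m + 1) hmem
    rw [hu] at hmem'
    obtain ⟨e, ⟨b, hb1, hb2⟩, hle⟩ := mem_ideal_span_monomial_image.mp hmem' c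
      (by simp [support_monomial])
    have hble : ∀ i, e i ≤ c i := fun i => hle i
    have hblt : ∀ i, b i < a i := by
      intro i
      by_contra hab
      push_neg at hab
      have hm1 : d * a i ≤ d * b i := Nat.mul_le_mul_left _ hab
      have hm2 := hble i
      rw [hb2 i] at hm2
      have hci : c i = (d - 1) * a i := by simp [hc]
      have hm3 : (d - 1) * a i = d * a i - a i := by rw [Nat.sub_mul, one_mul]
      have hm4 : a i ≤ d * a i := Nat.le_mul_of_pos_left _ (by omega)
      have := hpos i
      omega
    have hsumb : ∑ i, b i ≤ ∑ i, (a i - 1) :=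
      Finset.sum_le_sum fun i _ => by have := hblt i; omega
    omega
end

section
/- For integers n ≥ 1 and d ≥ 1, the number of monomials of degree 2d in n variables that can be written as a product of two squarefree monomials of degree d equals Σ_{i=0}^{d} C(n, 2i)·C(n - 2i, d - i). -/
/-!
A product `x^A * x^B` of two squarefree monomials of degree `d` is the same as `x^S * (x^T)^2`
with `S = A ∆ B` and `T = A ∩ B` disjoint, `#S = 2 * i` and `#T = d - i` where `i = d - #(A ∩ B)`.
Conversely any such `x^S * (x^T)^2` arises this way: split `S` into two halves `S₁`, `S \ S₁` and
take `A = T ∪ S₁`, `B = T ∪ (S \ S₁)`. Since `(S, T)` is recovered from the exponent vector as its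
level sets at `1` and `2`, the monomials are counted by the pairs `(S, T)`, of which there are
`C(n, 2i) * C(n - 2i, d - i)` for each `i`.
-/

open Finset

namespace SquarefreeVeronese

variable {α : Type*} [DecidableEq α]

lemma card_symmDiff_add_two_mul_card_inter (A B : Finset α) :
    #(symmDiff A B) + 2 * #(A ∩ B) = #A + #B := by
  rw [symmDiff_def, sup_eq_union, card_union_of_disjoint disjoint_sdiff_sdiff]
  have hA := card_sdiff_add_card_inter A B
  have hB := card_sdiff_add_card_inter B A
  rw [inter_comm] at hB
  omega

/-- The exponent vector of the product `x^A * x^B` of two squarefree monomials. -/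
def expProd (A B : Finset α) (x : α) : ℕ :=
  (if x ∈ A then 1 else 0) + (if x ∈ B then 1 else 0)

/-- The exponent vector of `x^S * (x^T)^2`. -/
def expMulSq (S T : Finset α) (x : α) : ℕ :=
  (if x ∈ S then 1 else 0) + (if x ∈ T then 2 else 0)

lemma expProd_eq_expMulSq (A B : Finset α) :
    expProd A B = expMulSq (symmDiff A B) (A ∩ B) := by
  funext x
  by_cases hA : x ∈ A <;> by_cases hB : x ∈ B <;> simp [expProd, expMulSq, mem_symmDiff, hA, hB]

lemma expMulSq_eq_expProd {S T S₁ : Finset α} (hST : Disjoint S T) (hS₁ : S₁ ⊆ S) :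
    expMulSq S T = expProd (T ∪ S₁) (T ∪ (S \ S₁)) := by
  funext x
  by_cases hT : x ∈ T
  · simp [expProd, expMulSq, hT, disjoint_right.mp hST hT]
  · by_cases h₁ : x ∈ S₁
    · simp [expProd, expMulSq, hT, h₁, hS₁ h₁]
    · simp [expProd, expMulSq, hT, h₁]

lemma mem_left_iff_expMulSq_eq_one {S T : Finset α} (hST : Disjoint S T) (x : α) :
    x ∈ S ↔ expMulSq S T x = 1 := by
  by_cases hS : x ∈ S
  · simp [expMulSq, hS, disjoint_left.mp hST hS]
  · by_cases hT : x ∈ T <;> simp [expMulSq, hS, hT]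

lemma mem_right_iff_expMulSq_eq_two {S T : Finset α} (hST : Disjoint S T) (x : α) :
    x ∈ T ↔ expMulSq S T x = 2 := by
  by_cases hT : x ∈ T
  · simp [expMulSq, hT, disjoint_right.mp hST hT]
  · by_cases hS : x ∈ S <;> simp [expMulSq, hS, hT]

lemma expMulSq_injOn :
    Set.InjOn (fun p : Finset α × Finset α => expMulSq p.1 p.2) {p | Disjoint p.1 p.2} := by
  rintro ⟨S, T⟩ hST ⟨S', T'⟩ hST' h
  simp only at h
  ext x
  · rw [mem_left_iff_expMulSq_eq_one hST, mem_left_iff_expMulSq_eq_one hST', h]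
  · rw [mem_right_iff_expMulSq_eq_two hST, mem_right_iff_expMulSq_eq_two hST', h]

variable [Fintype α]

def disjointPairs (k l : ℕ) : Finset (Finset α × Finset α) :=
  {p | Disjoint p.1 p.2 ∧ #p.1 = k ∧ #p.2 = l}

@[simp]
lemma mem_disjointPairs {k l : ℕ} {p : Finset α × Finset α} :
    p ∈ disjointPairs k l ↔ Disjoint p.1 p.2 ∧ #p.1 = k ∧ #p.2 = l := by
  simp [disjointPairs]

lemma filter_disjointPairs_fst_eq (k l : ℕ) (S : Finset α) (hS : #S = k) :
    {p ∈ disjointPairs (α := α) k l | p.1 = S} =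
      (powersetCard l Sᶜ).map (Function.Embedding.sectR S _) := by
  ext ⟨S', T⟩
  simp only [mem_filter, mem_disjointPairs, mem_map, mem_powersetCard,
    subset_compl_iff_disjoint_left, Function.Embedding.sectR_apply, Prod.mk.injEq]
  constructor
  · rintro ⟨⟨hST, -, hT⟩, rfl⟩
    exact ⟨T, ⟨hST, hT⟩, rfl, rfl⟩
  · rintro ⟨T, ⟨hST, hT⟩, rfl, rfl⟩
    exact ⟨⟨hST, hS, hT⟩, rfl⟩

lemma card_disjointPairs (k l : ℕ) :
    #(disjointPairs (α := α) k l) =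
      (Fintype.card α).choose k * (Fintype.card α - k).choose l := by
  have maps_to : ∀ p ∈ disjointPairs (α := α) k l, p.1 ∈ powersetCard k univ := fun p hp =>
    mem_powersetCard.mpr ⟨subset_univ _, (mem_disjointPairs.mp hp).2.1⟩
  rw [card_eq_sum_card_fiberwise maps_to, sum_congr rfl fun S hS => ?_, sum_const,
    card_powersetCard, card_univ, smul_eq_mul]
  rw [mem_powersetCard] at hS
  rw [filter_disjointPairs_fst_eq k l S hS.2, card_map, card_powersetCard, card_compl, hS.2]

lemma image_expProd_eq_image_expMulSq (d : ℕ) :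
    ({p : Finset α × Finset α | #p.1 = d ∧ #p.2 = d} : Finset _).image
        (fun p => expProd p.1 p.2) =
      ((range (d + 1)).biUnion fun i => disjointPairs (2 * i) (d - i)).image
        (fun p => expMulSq p.1 p.2) := by
  ext g
  simp only [mem_image, mem_filter, mem_univ, true_and, mem_biUnion, mem_range, mem_disjointPairs,
    Prod.exists]
  constructor
  · rintro ⟨A, B, ⟨hA, hB⟩, rfl⟩
    have hcard := card_symmDiff_add_two_mul_card_inter A B
    have hinter : #(A ∩ B) ≤ d := hA ▸ card_le_card inter_subset_left
    refine ⟨symmDiff A B, A ∩ B,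
      ⟨d - #(A ∩ B), by omega, disjoint_symmDiff_inf A B, by omega, by omega⟩,
      (expProd_eq_expMulSq A B).symm⟩
  · rintro ⟨S, T, ⟨i, hi, hST, hS, hT⟩, rfl⟩
    obtain ⟨S₁, hS₁, hS₁card⟩ := exists_subset_card_eq (show i ≤ #S by omega)
    refine ⟨T ∪ S₁, T ∪ (S \ S₁), ⟨?_, ?_⟩, (expMulSq_eq_expProd hST hS₁).symm⟩
    · rw [card_union_of_disjoint (hST.symm.mono_right hS₁)]
      omega
    · rw [card_union_of_disjoint (hST.symm.mono_right sdiff_subset), card_sdiff_of_subset hS₁]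
      omega

theorem card_image_expProd (d : ℕ) :
    #(({p : Finset α × Finset α | #p.1 = d ∧ #p.2 = d} : Finset _).image
        (fun p => expProd p.1 p.2)) =
      ∑ i ∈ range (d + 1),
        (Fintype.card α).choose (2 * i) * (Fintype.card α - 2 * i).choose (d - i) := by
  rw [image_expProd_eq_image_expMulSq, card_image_of_injOn, card_biUnion]
  · simp only [card_disjointPairs]
  · intro i _ j _ hij
    refine disjoint_left.mpr fun p hi hj => hij ?_
    simp only [mem_disjointPairs] at hi hj
    omega
  · refine expMulSq_injOn.mono fun p hp => ?_
    simp only [coe_biUnion, Set.mem_iUnion, mem_coe, mem_disjointPairs] at hp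
    obtain ⟨-, -, hST, -⟩ := hp
    exact hST

end SquarefreeVeronese

theorem stmt_19_general (n d : ℕ) :
    Finset.card
      (Finset.image
        (fun p : Finset (Fin n) × Finset (Fin n) =>
          (fun i : Fin n => (if i ∈ p.1 then 1 else 0) + (if i ∈ p.2 then 1 else 0)))
        ((Finset.univ : Finset (Finset (Fin n) × Finset (Fin n))).filter
          (fun p => p.1.card = d ∧ p.2.card = d)))
      = ∑ i ∈ Finset.range (d + 1),
          Nat.choose n (2 * i) * Nat.choose (n - 2 * i) (d - i) := by
  have h := SquarefreeVeronese.card_image_expProd (α := Fin n) d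
  rwa [Fintype.card_fin] at h

theorem stmt_19 (n d : ℕ) (hn : 1 ≤ n) (hd : 1 ≤ d) :
    Finset.card
      (Finset.image
        (fun p : Finset (Fin n) × Finset (Fin n) =>
          (fun i : Fin n => (if i ∈ p.1 then 1 else 0) + (if i ∈ p.2 then 1 else 0)))
        ((Finset.univ : Finset (Finset (Fin n) × Finset (Fin n))).filter
          (fun p => p.1.card = d ∧ p.2.card = d)))
      = ∑ i ∈ Finset.range (d + 1),
          Nat.choose n (2 * i) * Nat.choose (n - 2 * i) (d - i) :=
  stmt_19_general n d
end
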